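/- Let T and U be linear subspaces of ℝ^N with dim U ≤ dim T, and let [x,y] be a segment in ℝ^N. Then sin∠([x,y], T) ≤ sin∠([x,y], U) + sin∠(U, T). -/

import Mathlib

open RealInnerProductSpace

/-- The largest principal angle between two subspaces `U` and `T` of `ℝ^N`. -/
noncomputable def subspaceAngle {N : ℕ} (U T : Submodule ℝ (EuclideanSpace ℝ (Fin N))) : ℝ :=
  Real.arccos (sInf {c : ℝ | ∃ u ∈ U, ‖u‖ = 1 ∧
    c = sSup {s : ℝ | ∃ v ∈ T, ‖v‖ = 1 ∧ s = ⟪u, v⟫}})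

/-- The sine of the angle between the segment `[x, y]` and a subspace `T`:
the distance from the unit direction vector of the segment to `T`. -/
noncomputable def sinSegAngle {N : ℕ} (x y : EuclideanSpace ℝ (Fin N))
    (T : Submodule ℝ (EuclideanSpace ℝ (Fin N))) : ℝ :=
  Metric.infDist (‖y - x‖⁻¹ • (y - x)) (T : Set (EuclideanSpace ℝ (Fin N)))

section Aux

variable {N : ℕ}

local notation "E" => EuclideanSpace ℝ (Fin N)

/-- The distance from a vector to a subspace is realized by the orthogonal projection. -/
lemma infDist_eq_norm_sub_proj (K : Submodule ℝ E) (v : E) :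
    Metric.infDist v (K : Set E) = ‖v - (Submodule.orthogonalProjectionOnto K v : E)‖ := by
  apply le_antisymm
  · have := Metric.infDist_le_dist_of_mem (x := v) (Submodule.orthogonalProjectionOnto K v).2
    simpa [dist_eq_norm] using this
  · rw [← not_lt]
    intro hlt
    obtain ⟨z, hz, hdz⟩ := (Metric.infDist_lt_iff ⟨0, K.zero_mem⟩).1 hlt
    rw [dist_eq_norm] at hdz
    have hper : ⟪v - (Submodule.orthogonalProjectionOnto K v : E), (Submodule.orthogonalProjectionOnto K v : E) - z⟫ = 0 := by
      apply Submodule.starProjection_inner_eq_zero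
      exact K.sub_mem (Submodule.orthogonalProjectionOnto K v).2 hz
    have hdecomp : v - z = (v - (Submodule.orthogonalProjectionOnto K v : E)) +
        ((Submodule.orthogonalProjectionOnto K v : E) - z) := by abel
    have hpyth : ‖v - z‖ ^ 2 = ‖v - (Submodule.orthogonalProjectionOnto K v : E)‖ ^ 2 +
        ‖(Submodule.orthogonalProjectionOnto K v : E) - z‖ ^ 2 := by
      rw [hdecomp, norm_add_sq_real, hper]; ring
    nlinarith [norm_nonneg (v - z), norm_nonneg (v - (Submodule.orthogonalProjectionOnto K v : E)),
      norm_nonneg ((Submodule.orthogonalProjectionOnto K v : E) - z)]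


/-- The sup of inner products with unit vectors of `T` is nonnegative. -/
lemma sSup_inner_nonneg (T : Submodule ℝ E) (u : E) (hu : ‖u‖ = 1) :
    0 ≤ sSup {s : ℝ | ∃ v ∈ T, ‖v‖ = 1 ∧ s = ⟪u, v⟫} := by
  rcases eq_or_ne T ⊥ with hT | hT
  · have : {s : ℝ | ∃ v ∈ T, ‖v‖ = 1 ∧ s = ⟪u, v⟫} = ∅ := by
      ext s
      simp only [Set.mem_setOf_eq, Set.mem_empty_iff_false, iff_false]
      rintro ⟨v, hv, hv1, rfl⟩
      rw [hT, Submodule.mem_bot] at hv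
      simp [hv] at hv1
    rw [this, Real.sSup_empty]
  · obtain ⟨v₀, hv₀T, hv₀⟩ := Submodule.exists_mem_ne_zero_of_ne_bot hT
    set v : E := ‖v₀‖⁻¹ • v₀ with hv_def
    have hvT : v ∈ T := T.smul_mem _ hv₀T
    have hv1 : ‖v‖ = 1 := by
      rw [hv_def, norm_smul, norm_inv, norm_norm, inv_mul_cancel₀ (norm_ne_zero_iff.2 hv₀)]
    have hbdd : BddAbove {s : ℝ | ∃ v ∈ T, ‖v‖ = 1 ∧ s = ⟪u, v⟫} := by
      refine ⟨1, ?_⟩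
      rintro s ⟨w, hw, hw1, rfl⟩
      calc ⟪u, w⟫ ≤ ‖u‖ * ‖w‖ := real_inner_le_norm u w
        _ = 1 := by rw [hu, hw1]; ring
    have h1 : ⟪u, v⟫ ∈ {s : ℝ | ∃ v ∈ T, ‖v‖ = 1 ∧ s = ⟪u, v⟫} := ⟨v, hvT, hv1, rfl⟩
    have h2 : -⟪u, v⟫ ∈ {s : ℝ | ∃ v ∈ T, ‖v‖ = 1 ∧ s = ⟪u, v⟫} := by
      refine ⟨-v, T.neg_mem hvT, by simpa using hv1, by simp⟩
    have l1 := le_csSup hbdd h1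
    have l2 := le_csSup hbdd h2
    linarith

/-- The sup of inner products with unit vectors of `T` is at most the norm of the
orthogonal projection onto `T`. -/
lemma sSup_inner_le_norm_proj (T : Submodule ℝ E) (u : E) :
    sSup {s : ℝ | ∃ v ∈ T, ‖v‖ = 1 ∧ s = ⟪u, v⟫} ≤ ‖(Submodule.orthogonalProjectionOnto T u : E)‖ := by
  apply Real.sSup_le
  · rintro s ⟨w, hw, hw1, rfl⟩
    have h0 : ⟪u - (Submodule.orthogonalProjectionOnto T u : E), w⟫ = 0 :=
      Submodule.starProjection_inner_eq_zero u w hw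
    have : ⟪u, w⟫ = ⟪(Submodule.orthogonalProjectionOnto T u : E), w⟫ := by
      have := inner_sub_left (𝕜 := ℝ) u (Submodule.orthogonalProjectionOnto T u : E) w
      rw [h0] at this; linarith
    rw [this]
    calc ⟪(Submodule.orthogonalProjectionOnto T u : E), w⟫ ≤ ‖(Submodule.orthogonalProjectionOnto T u : E)‖ * ‖w‖ :=
        real_inner_le_norm _ _
      _ = ‖(Submodule.orthogonalProjectionOnto T u : E)‖ := by rw [hw1, mul_one]
  · exact norm_nonneg _

/-- Key lemma: for a unit vector `u ∈ U`, the distance from `u` to `T` is at most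
`sin (subspaceAngle U T)`. -/
lemma dist_unit_le_sin_angle (U T : Submodule ℝ E) (u : E) (huU : u ∈ U) (hu : ‖u‖ = 1) :
    ‖u - (Submodule.orthogonalProjectionOnto T u : E)‖ ≤ Real.sin (subspaceAngle U T) := by
  set S := {c : ℝ | ∃ u ∈ U, ‖u‖ = 1 ∧ c = sSup {s : ℝ | ∃ v ∈ T, ‖v‖ = 1 ∧ s = ⟪u, v⟫}} with hS
  set c₀ := sSup {s : ℝ | ∃ v ∈ T, ‖v‖ = 1 ∧ s = ⟪u, v⟫} with hc₀
  have hc₀S : c₀ ∈ S := ⟨u, huU, hu, rfl⟩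
  have hSnonneg : ∀ c ∈ S, 0 ≤ c := by
    rintro c ⟨w, hwU, hw1, rfl⟩
    exact sSup_inner_nonneg T w hw1
  have hbdd : BddBelow S := ⟨0, hSnonneg⟩
  have hinf_le : sInf S ≤ c₀ := csInf_le hbdd hc₀S
  have hinf_nonneg : 0 ≤ sInf S := le_csInf ⟨c₀, hc₀S⟩ hSnonneg
  have hc₀_le : c₀ ≤ ‖(Submodule.orthogonalProjectionOnto T u : E)‖ := sSup_inner_le_norm_proj T u
  have hc₀_nonneg : 0 ≤ c₀ := sSup_inner_nonneg T u hu
  -- Pythagoras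
  have hper : ⟪u - (Submodule.orthogonalProjectionOnto T u : E), (Submodule.orthogonalProjectionOnto T u : E)⟫ = 0 :=
    Submodule.starProjection_inner_eq_zero u _ (Submodule.orthogonalProjectionOnto T u).2
  have hpyth : 1 = ‖u - (Submodule.orthogonalProjectionOnto T u : E)‖ ^ 2 +
      ‖(Submodule.orthogonalProjectionOnto T u : E)‖ ^ 2 := by
    have h := norm_add_sq_real (u - (Submodule.orthogonalProjectionOnto T u : E))
      (Submodule.orthogonalProjectionOnto T u : E)
    rw [sub_add_cancel, hper, hu] at h
    nlinarith
  rw [subspaceAngle, Real.sin_arccos, ← hS]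
  rw [Real.le_sqrt (norm_nonneg _) (by nlinarith)]
  nlinarith [norm_nonneg (Submodule.orthogonalProjectionOnto T u : E)]

end Aux

theorem sin_seg_angle_triangle {N : ℕ} (x y : EuclideanSpace ℝ (Fin N)) (hxy : x ≠ y)
    (U T : Submodule ℝ (EuclideanSpace ℝ (Fin N)))
    (hdim : Module.finrank ℝ U ≤ Module.finrank ℝ T) :
    sinSegAngle x y T ≤ sinSegAngle x y U + Real.sin (subspaceAngle U T) := by
  set w : EuclideanSpace ℝ (Fin N) := ‖y - x‖⁻¹ • (y - x) with hw_def
  have hyx : y - x ≠ 0 := sub_ne_zero.2 (Ne.symm hxy)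
  have hw : ‖w‖ = 1 := by
    rw [hw_def, norm_smul, norm_inv, norm_norm, inv_mul_cancel₀ (norm_ne_zero_iff.2 hyx)]
  have hsin_nonneg : 0 ≤ Real.sin (subspaceAngle U T) :=
    Real.sin_nonneg_of_nonneg_of_le_pi (Real.arccos_nonneg _) (Real.arccos_le_pi _)
  set p : EuclideanSpace ℝ (Fin N) := (Submodule.orthogonalProjectionOnto U w : EuclideanSpace ℝ (Fin N))
    with hp_def
  have hU_dist : sinSegAngle x y U = ‖w - p‖ := infDist_eq_norm_sub_proj U w
  have hper : ⟪w - p, p⟫ = 0 :=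
    Submodule.starProjection_inner_eq_zero w _ (Submodule.orthogonalProjectionOnto U w).2
  have hpyth : 1 = ‖w - p‖ ^ 2 + ‖p‖ ^ 2 := by
    have h := norm_add_sq_real (w - p) p
    rw [sub_add_cancel, hw] at h
    nlinarith
  have hp_le : ‖p‖ ≤ 1 := by nlinarith [norm_nonneg (w - p), norm_nonneg p]
  rcases eq_or_ne p 0 with hp0 | hp0
  · have h1 : sinSegAngle x y U = 1 := by rw [hU_dist, hp0, sub_zero, hw]
    have h2 : sinSegAngle x y T ≤ 1 := by
      have := Metric.infDist_le_dist_of_mem (x := w) T.zero_mem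
      simpa [sinSegAngle, ← hw_def, dist_eq_norm, hw] using this
    linarith
  · set u₀ : EuclideanSpace ℝ (Fin N) := ‖p‖⁻¹ • p with hu₀_def
    have hu₀U : u₀ ∈ U := U.smul_mem _ (Submodule.orthogonalProjectionOnto U w).2
    have hu₀ : ‖u₀‖ = 1 := by
      rw [hu₀_def, norm_smul, norm_inv, norm_norm, inv_mul_cancel₀ (norm_ne_zero_iff.2 hp0)]
    have hkey : ‖u₀ - (Submodule.orthogonalProjectionOnto T u₀ : EuclideanSpace ℝ (Fin N))‖ ≤
        Real.sin (subspaceAngle U T) := dist_unit_le_sin_angle U T u₀ hu₀U hu₀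
    set q : EuclideanSpace ℝ (Fin N) :=
      ‖p‖ • (Submodule.orthogonalProjectionOnto T u₀ : EuclideanSpace ℝ (Fin N)) with hq_def
    have hqT : q ∈ T := T.smul_mem _ (Submodule.orthogonalProjectionOnto T u₀).2
    have hpu₀ : p = ‖p‖ • u₀ := by
      rw [hu₀_def, smul_smul, mul_inv_cancel₀ (norm_ne_zero_iff.2 hp0), one_smul]
    have hstep : ‖p - q‖ ≤ Real.sin (subspaceAngle U T) := by
      have : p - q = ‖p‖ • (u₀ - (Submodule.orthogonalProjectionOnto T u₀ : EuclideanSpace ℝ (Fin N))) := by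
        rw [hq_def, smul_sub, ← hpu₀]
      rw [this, norm_smul, norm_norm]
      calc ‖p‖ * ‖u₀ - (Submodule.orthogonalProjectionOnto T u₀ : EuclideanSpace ℝ (Fin N))‖
          ≤ 1 * Real.sin (subspaceAngle U T) := by
            apply mul_le_mul hp_le hkey (norm_nonneg _) zero_le_one
        _ = _ := one_mul _
    have hTle : sinSegAngle x y T ≤ ‖w - q‖ := by
      have := Metric.infDist_le_dist_of_mem (x := w) hqT
      simpa [sinSegAngle, ← hw_def, dist_eq_norm] using this
    calc sinSegAngle x y T ≤ ‖w - q‖ := hTle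
      _ ≤ ‖w - p‖ + ‖p - q‖ := by
          have : w - q = (w - p) + (p - q) := by abel
          rw [this]; exact norm_add_le _ _
      _ ≤ sinSegAngle x y U + Real.sin (subspaceAngle U T) := by
          rw [hU_dist]; linarith
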